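/- The words v occurring with nonzero coefficient in H w (for a word w with n_x x's and n_y y's) are exactly those words v in M_{n_x,n_y} such that: (i) for every i with the i-th x of v immediately followed by a y, the number of y's left of the i-th x in v equals one less than the number of y's left of the i-th x in w; and (ii) for every other i, the number of y's left of the i-th x in v is at least that in w. The coefficient of such a v in H w is (−1)^{|E^x_v|}, where E^x_v is the set of indices of x's in v immediately followed by y. -/

import Mathlib

open scoped Classical

/-- Words over the two-letter alphabet {x,y}; `false` is `x`, `true` is `y`. -/
abbrev Word := List Bool

/-- 0-indexed positions of the x's (`false`) in a word. -/
def xIdx (w : Word) : List ℕ :=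
  (List.range w.length).filter (fun j => w.getD j true = false)

/-- 0-indexed positions of the y's (`true`) in a word. -/
def yIdx (w : Word) : List ℕ :=
  (List.range w.length).filter (fun j => w.getD j false = true)

/-- `fX w i` = number of y's strictly left of the i-th x of `w` (i is 0-indexed). -/
def fX (w : Word) (i : ℕ) : ℕ := (xIdx w).getD i 0 - i

/-- `fY w j` = number of x's strictly left of the j-th y of `w` (j is 0-indexed). -/
def fY (w : Word) (j : ℕ) : ℕ := (yIdx w).getD j 0 - j

/-- `hX w i` = (1-indexed) position of the i-th x of `w` (i is 0-indexed). -/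
def hX (w : Word) (i : ℕ) : ℕ := (xIdx w).getD i 0 + 1

/-- The pawn-move partial order: same letter counts, and each x of `w0` lies at a
position at most that of the corresponding x of `w1`. -/
def wle (w0 w1 : Word) : Prop :=
  w0.count false = w1.count false ∧ w0.count true = w1.count true ∧
  ∀ i < w0.count false, (xIdx w0).getD i 0 ≤ (xIdx w1).getD i 0

/-- Creation operator `a*_{s,i}` on words: `i = 0` prepends `s`; `1 ≤ i ≤ n_s`
replaces the i-th `s` by `ss`; `i = n_s + 1` appends `s`. -/
def create (s : Bool) : ℕ → Word → Word
  | 0, w => s :: w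
  | _+1, [] => [s]
  | i+1, a :: w =>
    if a = s then (if i = 0 then s :: s :: w else a :: create s i w)
    else a :: create s (i+1) w

/-- Delete the i-th occurrence (1-indexed) of `s`. -/
def delNth (s : Bool) : ℕ → Word → Word
  | _, [] => []
  | i, a :: w => if a = s then (if i ≤ 1 then w else a :: delNth s (i-1) w)
                 else a :: delNth s i w

/-- Annihilation operator `a_{s,i}` on words: `i = 0` deletes an initial `s` (else 0);
`1 ≤ i ≤ n_s` deletes the i-th `s`; `i = n_s + 1` deletes a final `s` (else 0). -/
def annih (s : Bool) (i : ℕ) (w : Word) : Option Word :=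
  if i = 0 then
    match w with
    | a :: t => if a = s then some t else none
    | [] => none
  else if i ≤ w.count s then some (delNth s i w)
  else if i = w.count s + 1 then
    if w.getLast? = some s then some w.dropLast else none
  else none

/-- The free ℤ-module on words: the Fock space `F`. -/
abbrev FS := Word →₀ ℤ

/-- Basis vector of a word. -/
noncomputable def δ (w : Word) : FS := Finsupp.single w 1

/-- `0` for `none`, basis vector for `some`. -/
noncomputable def optδ (o : Option Word) : FS := o.elim 0 δ

/-- Extend a word-indexed family of vectors to a linear map on `FS`. -/
noncomputable def opOf (g : Word → FS) : FS →ₗ[ℤ] FS := Finsupp.lift FS ℤ Word g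

/-- Creation operator as a linear map. -/
noncomputable def Cr (s : Bool) (i : ℕ) : FS →ₗ[ℤ] FS := opOf (fun w => δ (create s i w))

/-- Annihilation operator as a linear map. -/
noncomputable def An (s : Bool) (i : ℕ) : FS →ₗ[ℤ] FS := opOf (fun w => optδ (annih s i w))

/-- Boolean bilinear form on words: `1` if `w0 ≤ w1` in the pawn-move order, else `0`. -/
noncomputable def pairW (w0 w1 : Word) : ℤ := if wle w0 w1 then 1 else 0

/-- Bilinear extension of `pairW` to the free module. -/
noncomputable def pairF (u v : FS) : ℤ :=
  u.sum fun w0 a => v.sum fun w1 b => a * b * pairW w0 w1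

/-- Kronecker delta form on words. -/
noncomputable def dotW (w0 w1 : Word) : ℤ := if w0 = w1 then 1 else 0

/-- Bilinear extension of `dotW`: words form an orthonormal basis. -/
noncomputable def dotF (u v : FS) : ℤ :=
  u.sum fun w0 a => v.sum fun w1 b => a * b * dotW w0 w1

/-- All words of a given length. -/
noncomputable def wordsOfLen (n : ℕ) : Finset Word :=
  (Finset.univ : Finset (Fin n → Bool)).image List.ofFn

/-- Swap `xy → yx` at the x's whose (0-indexed) number lies in `T`;
the counter `k` records how many x's have been passed. -/
def psiX (T : Finset ℕ) : Word → ℕ → Word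
  | [], _ => []
  | false :: true :: w, k =>
      if k ∈ T then true :: false :: psiX T w (k+1)
      else false :: psiX T (true :: w) (k+1)
  | false :: w, k => false :: psiX T w (k+1)
  | true :: w, k => true :: psiX T w k
  termination_by w _ => w.length
  decreasing_by all_goals (simp <;> omega)

/-- Swap `yx → xy` at the y's whose (0-indexed) number lies in `T`. -/
def psiY (T : Finset ℕ) : Word → ℕ → Word
  | [], _ => []
  | true :: false :: w, k =>
      if k ∈ T then false :: true :: psiY T w (k+1)
      else true :: psiY T (false :: w) (k+1)
  | true :: w, k => true :: psiY T w (k+1)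
  | false :: w, k => false :: psiY T w k
  termination_by w _ => w.length
  decreasing_by all_goals (simp <;> omega)

/-- `Ex w`: 0-indexed numbers of the x's of `w` immediately followed by a y. -/
noncomputable def Ex (w : Word) : Finset ℕ :=
  (Finset.range (w.count false)).filter
    (fun i => w.getD ((xIdx w).getD i 0 + 1) false = true)

/-- `Ey w`: 0-indexed numbers of the y's of `w` immediately followed by an x. -/
noncomputable def Ey (w : Word) : Finset ℕ :=
  (Finset.range (w.count true)).filter
    (fun i => w.getD ((yIdx w).getD i 0 + 1) true = false)

/-- The duality operator on a word, explicitly: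
`H w = Σ_{w' ≥ w} Σ_{T ⊆ E^y_{w'}} (−1)^{|T|} ψ^y_T w'`. -/
noncomputable def HW (w : Word) : FS :=
  ∑ w' ∈ (wordsOfLen w.length).filter (fun u => wle w u),
    ∑ T ∈ (Ey w').powerset, ((-1 : ℤ)^T.card) • δ (psiY T w' 0)

/-! Reading the double sum defining `H w` backwards: undoing the swaps gives a
cardinality-preserving bijection between the `T ⊆ E^y_{w'}` with `ψ^y_T w' = v` and the
`S ⊆ E^x_v` with `ψ^x_S v = w'`, so the coefficient of `v` is
`∑_{S ⊆ E^x_v} (-1)^|S| [w ≤ ψ^x_S v]`. Since `ψ^x_S` moves the `i`-th x of `v` one step to the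
right exactly for `i ∈ S`, the indicator `[w ≤ ψ^x_S v]` is the product over `i` of
`[p_i ≤ q_i + [i ∈ S]]`, where `p`, `q` are the positions of the x's of `w` and `v`. The
alternating sum therefore factors as
`∏_{i ∉ E^x_v} [p_i ≤ q_i] * ∏_{i ∈ E^x_v} ([p_i ≤ q_i] - [p_i ≤ q_i + 1])`,
and each factor of the second product is `-[p_i = q_i + 1]`. -/

open Finset

theorem Finset.card_filter_le_eq_succ_le_add (T : Finset ℕ) (k : ℕ) :
    #{j ∈ T | k ≤ j} = #{j ∈ T | k + 1 ≤ j} + if k ∈ T then 1 else 0 := by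
  rw [card_filter, card_filter, ← sum_ite_eq' T k fun _ => 1, ← sum_add_distrib]
  refine sum_congr rfl fun j _ => ?_
  split_ifs <;> omega

theorem Finset.sum_powerset_neg_one_pow_mul_prod_ite {ι R : Type*} [CommRing R] [DecidableEq ι]
    {s t : Finset ι} (h : s ⊆ t) (f g : ι → R) :
    ∑ u ∈ s.powerset, (-1) ^ #u * ∏ i ∈ t, (if i ∈ u then f i else g i) =
      (∏ i ∈ t \ s, g i) * ∏ i ∈ s, (g i - f i) := by
  simp_rw [sub_eq_neg_add, prod_add, mul_sum]
  refine sum_congr rfl fun u hu => ?_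
  have hus := mem_powerset.1 hu
  rw [← prod_sdiff h, prod_congr rfl fun i hi => if_neg fun hiu => (mem_sdiff.1 hi).2 (hus hiu),
    show ∏ i ∈ s, (if i ∈ u then f i else g i) = ∏ i ∈ s, u.piecewise f g i from rfl,
    prod_piecewise, inter_eq_right.2 hus, prod_neg]
  ring

theorem Finset.sum_powerset_neg_one_pow_mul_boole_forall_le {ι : Type*} [DecidableEq ι]
    {s t : Finset ι} (h : s ⊆ t) (p q : ι → ℕ) :
    ∑ u ∈ s.powerset, (-1 : ℤ) ^ #u *
        (if ∀ i ∈ t, p i ≤ q i + if i ∈ u then 1 else 0 then 1 else 0) =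
      if (∀ i ∈ s, p i = q i + 1) ∧ ∀ i ∈ t \ s, p i ≤ q i then (-1) ^ #s else 0 := by
  have hprod : ∀ u : Finset ι, (if ∀ i ∈ t, p i ≤ q i + if i ∈ u then 1 else 0 then 1 else 0) =
      ∏ i ∈ t, if i ∈ u then (if p i ≤ q i + 1 then 1 else 0) else
        (if p i ≤ q i then (1 : ℤ) else 0) := by
    intro u
    simp only [← prod_boole]
    exact prod_congr rfl fun i _ => by split_ifs <;> omega
  have hdiff : ∀ i ∈ s, ((if p i ≤ q i then 1 else 0) - if p i ≤ q i + 1 then 1 else 0 : ℤ) =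
      -if p i = q i + 1 then 1 else 0 := fun i _ => by split_ifs <;> omega
  simp only [hprod]
  rw [sum_powerset_neg_one_pow_mul_prod_ite h, prod_congr rfl hdiff, prod_neg, prod_boole,
    prod_boole]
  split_ifs <;> simp_all

lemma mem_wordsOfLen (u : Word) (n : ℕ) : u ∈ wordsOfLen n ↔ u.length = n := by
  constructor
  · rw [wordsOfLen, mem_image]
    rintro ⟨f, -, rfl⟩
    simp
  · rintro rfl
    exact mem_image.2 ⟨u.get, mem_univ _, List.ofFn_get u⟩

lemma length_eq_of_wle {u v : Word} (h : wle u v) : u.length = v.length := by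
  rw [← List.count_false_add_count_true, ← List.count_false_add_count_true v, h.1, h.2.1]

@[simp] lemma xIdx_nil : xIdx [] = [] := rfl

lemma xIdx_cons (b : Bool) (u : Word) :
    xIdx (b :: u) = (if b then [] else [0]) ++ (xIdx u).map (· + 1) := by
  unfold xIdx
  rw [List.length_cons, List.range_succ_eq_map, List.filter_cons, List.filter_map]
  cases b <;> simp [Function.comp_def]

@[simp] lemma xIdx_true_cons (u : Word) : xIdx (true :: u) = (xIdx u).map (· + 1) := by
  simp [xIdx_cons]

@[simp] lemma xIdx_false_cons (u : Word) : xIdx (false :: u) = 0 :: (xIdx u).map (· + 1) := by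
  simp [xIdx_cons]

lemma length_xIdx (u : Word) : (xIdx u).length = u.count false := by
  induction u with
  | nil => rfl
  | cons b u ih => cases b <;> simp [ih]

lemma le_of_getElem?_xIdx_eq_some {u : Word} {i p : ℕ} (h : (xIdx u)[i]? = some p) : i ≤ p := by
  induction u generalizing i p with
  | nil => simp at h
  | cons b u ih =>
    cases b
    · cases i with
      | zero => omega
      | succ i =>
        simp only [xIdx_false_cons, List.getElem?_cons_succ, List.getElem?_map,
          Option.map_eq_some_iff] at h
        obtain ⟨q, hq, rfl⟩ := h
        have := ih hq; omega
    · simp only [xIdx_true_cons, List.getElem?_map, Option.map_eq_some_iff] at h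
      obtain ⟨q, hq, rfl⟩ := h
      have := ih hq; omega

lemma le_getD_xIdx {u : Word} {i : ℕ} (hi : i < u.count false) : i ≤ (xIdx u).getD i 0 := by
  rw [← length_xIdx] at hi
  rw [List.getD_eq_getElem?_getD, List.getElem?_eq_getElem hi, Option.getD_some]
  exact le_of_getElem?_xIdx_eq_some (List.getElem?_eq_getElem hi)

lemma Ex_subset_range (v : Word) : Ex v ⊆ range (v.count false) := filter_subset _ _

lemma mem_Ex_iff (w : Word) (i : ℕ) :
    i ∈ Ex w ↔ ∃ p, (xIdx w)[i]? = some p ∧ w[p + 1]? = some true := by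
  rw [Ex, mem_filter, mem_range, ← length_xIdx]
  constructor
  · rintro ⟨hi, h⟩
    refine ⟨_, List.getElem?_eq_getElem hi, ?_⟩
    simp only [List.getD_eq_getElem?_getD, List.getElem?_eq_getElem hi, Option.getD_some] at h
    revert h
    cases w[(xIdx w)[i] + 1]? <;> simp
  · rintro ⟨p, hp, h⟩
    obtain ⟨hi, rfl⟩ := List.getElem?_eq_some_iff.1 hp
    simp [hi, List.getD_eq_getElem?_getD, h]

@[simp] lemma Ex_true_cons (u : Word) : Ex (true :: u) = Ex u := by
  ext i; simp [mem_Ex_iff]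

lemma succ_mem_Ex_false_cons (u : Word) (i : ℕ) : i + 1 ∈ Ex (false :: u) ↔ i ∈ Ex u := by
  simp [mem_Ex_iff]

lemma zero_mem_Ex_false_cons (u : Word) : 0 ∈ Ex (false :: u) ↔ ∃ u', u = true :: u' := by
  cases u with
  | nil => simp [mem_Ex_iff]
  | cons a u => cases a <;> simp [mem_Ex_iff]

lemma count_map_not (w : Word) (b : Bool) : (w.map not).count b = w.count !b := by
  induction w with
  | nil => rfl
  | cons a u ih => cases a <;> cases b <;> simp [ih]

lemma xIdx_map_not (w : Word) : xIdx (w.map not) = yIdx w := by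
  unfold xIdx yIdx
  rw [List.length_map]
  refine List.filter_congr fun j _ => ?_
  rw [← Bool.not_false, List.getD_map]
  simp

lemma Ex_map_not (w : Word) : Ex (w.map not) = Ey w := by
  unfold Ex Ey
  rw [xIdx_map_not, count_map_not]
  refine filter_congr fun i _ => ?_
  rw [← Bool.not_true, List.getD_map]
  simp

-- Exchanging the letters turns `ψ^y` into `ψ^x`, so facts about one transfer to the other.
lemma psiX_map_not (T : Finset ℕ) (w : Word) (k : ℕ) :
    psiX T (w.map not) k = (psiY T w k).map not := by
  induction w, k using psiY.induct T with
  | case1 => simp [psiX, psiY]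
  | case2 w k hk ih => simp [psiX, psiY, hk, ih]
  | case3 w k hk ih => simp_all [psiX, psiY]
  | case4 w k hw ih =>
    cases w with
    | nil => simp [psiX, psiY]
    | cons a w => cases a <;> simp_all [psiX, psiY]
  | case5 w k ih => simp [psiX, psiY, ih]

@[simp] lemma Ey_false_cons (u : Word) : Ey (false :: u) = Ey u := by
  rw [← Ex_map_not, ← Ex_map_not, List.map_cons, Bool.not_false, Ex_true_cons]

lemma succ_mem_Ey_true_cons (u : Word) (j : ℕ) : j + 1 ∈ Ey (true :: u) ↔ j ∈ Ey u := by
  rw [← Ex_map_not, ← Ex_map_not, List.map_cons, Bool.not_true, succ_mem_Ex_false_cons]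

lemma zero_mem_Ey_true_cons (u : Word) : 0 ∈ Ey (true :: u) ↔ ∃ u', u = false :: u' := by
  rw [← Ex_map_not, List.map_cons, Bool.not_true, zero_mem_Ex_false_cons]
  cases u with
  | nil => simp
  | cons a u => cases a <;> simp

@[simp] lemma count_psiX (S : Finset ℕ) (w : Word) (k : ℕ) (b : Bool) :
    (psiX S w k).count b = w.count b := by
  induction w, k using psiX.induct S with
  | case1 => simp [psiX]
  | case2 w k hk ih => cases b <;> simp_all [psiX]
  | case3 w k hk ih => simp_all [psiX, List.count_cons]
  | case4 w k hw ih =>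
    cases w with
    | nil => simp [psiX]
    | cons a w => cases a <;> simp_all [psiX, List.count_cons]
  | case5 w k ih => simp_all [psiX, List.count_cons]

lemma psiX_congr {S₁ S₂ : Finset ℕ} (w : Word) {k : ℕ} (h : ∀ i, k ≤ i → (i ∈ S₁ ↔ i ∈ S₂)) :
    psiX S₁ w k = psiX S₂ w k := by
  induction w, k using psiX.induct S₁ with
  | case1 => simp [psiX]
  | case2 w k hk ih =>
    simp [psiX, hk, (h k le_rfl).1 hk, ih fun i hi => h i (by omega)]
  | case3 w k hk ih =>
    simp [psiX, hk, mt (h k le_rfl).2 hk, ih fun i hi => h i (by omega)]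
  | case4 w k hw ih =>
    cases w with
    | nil => simp [psiX]
    | cons a w => cases a <;> simp_all [psiX, ih fun i hi => h i (by omega)]
  | case5 w k ih => simp [psiX, ih h]

@[simp] lemma psiX_true_cons (S : Finset ℕ) (u : Word) (k : ℕ) :
    psiX S (true :: u) k = true :: psiX S u k := by
  simp [psiX]

lemma psiX_false_cons {S : Finset ℕ} (u : Word) {k : ℕ} (hk : k ∉ S) :
    psiX S (false :: u) k = false :: psiX S u (k + 1) := by
  cases u with
  | nil => simp [psiX]
  | cons a u => cases a <;> simp [psiX, hk]

lemma sub_mem_Ex_of_false_cons {S : Finset ℕ} {u : Word} {k : ℕ}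
    (hS : ∀ i ∈ S, k ≤ i → i - k ∈ Ex (false :: u)) : ∀ i ∈ S, k + 1 ≤ i → i - (k + 1) ∈ Ex u :=
  fun i hi hki => by
    have := hS i hi (by omega)
    rwa [show i - k = i - (k + 1) + 1 by omega, succ_mem_Ex_false_cons] at this

lemma getElem?_xIdx_psiX {S : Finset ℕ} {w : Word} {k : ℕ} (hS : ∀ i ∈ S, k ≤ i → i - k ∈ Ex w)
    (i : ℕ) : (xIdx (psiX S w k))[i]? = (xIdx w)[i]?.map (· + if k + i ∈ S then 1 else 0) := by
  induction w, k using psiX.induct S generalizing i with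
  | case1 => simp [psiX]
  | case2 w k hk ih =>
    have ih := ih (by simpa using sub_mem_Ex_of_false_cons hS)
    cases i with
    | zero => simp [psiX, hk]
    | succ i =>
      simp only [psiX, hk, if_true, xIdx_true_cons, xIdx_false_cons, List.map_cons,
        List.getElem?_cons_succ, List.getElem?_map, ih, Option.map_map]
      cases (xIdx w)[i]? <;> simp [Function.comp_def, ← add_assoc, add_right_comm]
  | case3 w k hk ih =>
    have ih := ih (sub_mem_Ex_of_false_cons hS)
    have hstep : psiX S (false :: true :: w) k = false :: psiX S (true :: w) (k + 1) := by
      simp [psiX, hk]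
    cases i with
    | zero => simp [hstep, hk]
    | succ i =>
      simp only [hstep, xIdx_false_cons, List.getElem?_cons_succ, List.getElem?_map, ih,
        Option.map_map]
      cases (xIdx (true :: w))[i]? <;> simp [Function.comp_def, ← add_assoc, add_right_comm]
  | case4 w k hw ih =>
    have hk : k ∉ S := fun hk => by
      obtain ⟨w', rfl⟩ := (zero_mem_Ex_false_cons w).1 (by simpa using hS k hk le_rfl)
      exact hw w' rfl
    have ih := ih (sub_mem_Ex_of_false_cons hS)
    cases i with
    | zero => simp [psiX_false_cons w hk, hk]
    | succ i =>
      simp only [psiX_false_cons w hk, xIdx_false_cons, List.getElem?_cons_succ,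
        List.getElem?_map, ih, Option.map_map]
      cases (xIdx w)[i]? <;> simp [Function.comp_def, ← add_assoc, add_right_comm]
  | case5 w k ih =>
    have ih := ih (by simpa using hS) i
    simp only [psiX, xIdx_true_cons, List.getElem?_map, ih, Option.map_map]
    cases (xIdx w)[i]? <;> simp [Function.comp_def, add_right_comm]

lemma map_not_map_not (w : Word) : (w.map not).map not = w := by
  simp [Function.comp_def]

lemma psiY_eq_map_not_psiX (T : Finset ℕ) (w : Word) (k : ℕ) :
    psiY T w k = (psiX T (w.map not) k).map not := by
  rw [psiX_map_not, map_not_map_not]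

lemma getElem?_xIdx_psiX_zero {S : Finset ℕ} {w : Word} (hS : S ⊆ Ex w) (i : ℕ) :
    (xIdx (psiX S w 0))[i]? = (xIdx w)[i]?.map (· + if i ∈ S then 1 else 0) := by
  simpa using getElem?_xIdx_psiX (w := w) (k := 0) (fun j hj _ => by simpa using hS hj) i

lemma psiX_injOn (w : Word) : Set.InjOn (fun S => psiX S w 0) ↑(Ex w).powerset := by
  intro S₁ h₁ S₂ h₂ heq
  simp only [coe_powerset, Set.mem_preimage, Set.mem_powerset_iff, coe_subset] at h₁ h₂
  ext i
  by_cases hi : i ∈ Ex w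
  · obtain ⟨p, hp, -⟩ := (mem_Ex_iff w i).1 hi
    have := congrArg (fun u => (xIdx u)[i]?) heq
    simp only [getElem?_xIdx_psiX_zero h₁, getElem?_xIdx_psiX_zero h₂, hp, Option.map_some,
      Option.some.injEq] at this
    split_ifs at this <;> simp_all
  · exact iff_of_false (fun h => hi (h₁ h)) (fun h => hi (h₂ h))

lemma psiY_injOn (w : Word) : Set.InjOn (fun T => psiY T w 0) ↑(Ey w).powerset := by
  intro T₁ h₁ T₂ h₂ heq
  rw [← Ex_map_not] at h₁ h₂
  refine psiX_injOn (w.map not) h₁ h₂ ((List.map_injective_iff (f := not)).2 (by decide) ?_)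
  simpa only [psiY_eq_map_not_psiX] using heq

lemma sub_mem_Ey_of_true_cons {T : Finset ℕ} {u : Word} {k : ℕ}
    (hT : ∀ j ∈ T, k ≤ j → j - k ∈ Ey (true :: u)) : ∀ j ∈ T, k + 1 ≤ j → j - (k + 1) ∈ Ey u :=
  fun j hj hkj => by
    have := hT j hj (by omega)
    rwa [show j - k = j - (k + 1) + 1 by omega, succ_mem_Ey_true_cons] at this

@[simp] lemma psiY_false_cons (T : Finset ℕ) (u : Word) (k : ℕ) :
    psiY T (false :: u) k = false :: psiY T u k := by
  simp [psiY]

lemma psiY_true_cons {T : Finset ℕ} (u : Word) {k : ℕ} (hk : k ∉ T) :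
    psiY T (true :: u) k = true :: psiY T u (k + 1) := by
  cases u with
  | nil => simp [psiY]
  | cons a u => cases a <;> simp [psiY, hk]

-- `ky` and `kx` count the y's and x's already passed; only the elements `j ≥ ky` of `T` act.
lemma exists_psiX_psiY_eq (T : Finset ℕ) (w : Word) (ky kx : ℕ)
    (hT : ∀ j ∈ T, ky ≤ j → j - ky ∈ Ey w) :
    ∃ S : Finset ℕ, (∀ i ∈ S, kx ≤ i ∧ i - kx ∈ Ex (psiY T w ky)) ∧
      psiX S (psiY T w ky) kx = w ∧ #S = #{j ∈ T | ky ≤ j} := by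
  induction w, ky using psiY.induct T generalizing kx with
  | case1 ky =>
    refine ⟨∅, by simp, by simp [psiX, psiY], ?_⟩
    rw [card_empty, eq_comm, card_eq_zero, filter_eq_empty_iff]
    intro j hj hkj
    simpa [Ey] using hT j hj hkj
  | case2 u ky hk ih =>
    have hstep : psiY T (true :: false :: u) ky = false :: true :: psiY T u (ky + 1) := by
      simp [psiY, hk]
    obtain ⟨S, hS, hψ, hcard⟩ := ih (kx + 1) (by simpa using sub_mem_Ey_of_true_cons hT)
    have hkx : kx ∉ S := fun h => by have := (hS kx h).1; omega
    refine ⟨insert kx S, fun i hi => ?_, ?_, ?_⟩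
    · rw [hstep]
      rcases mem_insert.1 hi with rfl | hi
      · simp [zero_mem_Ex_false_cons]
      · obtain ⟨hi, hmem⟩ := hS i hi
        refine ⟨by omega, ?_⟩
        rwa [show i - kx = i - (kx + 1) + 1 by omega, succ_mem_Ex_false_cons, Ex_true_cons]
    · have hswap : psiX (insert kx S) (false :: true :: psiY T u (ky + 1)) kx =
          true :: false :: psiX (insert kx S) (psiY T u (ky + 1)) (kx + 1) := by
        simp [psiX]
      rw [hstep, hswap, psiX_congr _ (S₂ := S) fun i hi => by simp; omega, hψ]
    · rw [card_insert_of_notMem hkx, hcard, card_filter_le_eq_succ_le_add T ky, if_pos hk]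
  | case3 u ky hk ih =>
    obtain ⟨S, hS, hψ, hcard⟩ := ih kx (sub_mem_Ey_of_true_cons hT)
    rw [psiY_true_cons _ hk]
    refine ⟨S, by simpa using hS, by rw [psiX_true_cons, hψ], ?_⟩
    rw [hcard, card_filter_le_eq_succ_le_add T ky, if_neg hk, add_zero]
  | case4 u ky hu ih =>
    have hk : ky ∉ T := fun hk => by
      obtain ⟨u', rfl⟩ := (zero_mem_Ey_true_cons u).1 (by simpa using hT ky hk le_rfl)
      exact hu u' rfl
    obtain ⟨S, hS, hψ, hcard⟩ := ih kx (sub_mem_Ey_of_true_cons hT)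
    rw [psiY_true_cons _ hk]
    refine ⟨S, by simpa using hS, by rw [psiX_true_cons, hψ], ?_⟩
    rw [hcard, card_filter_le_eq_succ_le_add T ky, if_neg hk, add_zero]
  | case5 u ky ih =>
    obtain ⟨S, hS, hψ, hcard⟩ := ih (kx + 1) (by simpa using hT)
    have hkx : kx ∉ S := fun h => by have := (hS kx h).1; omega
    refine ⟨S, fun i hi => ?_, by rw [psiY_false_cons, psiX_false_cons _ hkx, hψ], hcard⟩
    obtain ⟨hi, hmem⟩ := hS i hi
    refine ⟨by omega, ?_⟩
    rwa [psiY_false_cons, show i - kx = i - (kx + 1) + 1 by omega, succ_mem_Ex_false_cons]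

lemma exists_psiX_eq_of_psiY {T : Finset ℕ} {w : Word} (hT : T ⊆ Ey w) :
    ∃ S ⊆ Ex (psiY T w 0), psiX S (psiY T w 0) 0 = w ∧ #S = #T := by
  obtain ⟨S, hS, hψ, hcard⟩ := exists_psiX_psiY_eq T w 0 0 fun j hj _ => by simpa using hT hj
  exact ⟨S, fun i hi => by simpa using (hS i hi).2, hψ, by simpa using hcard⟩

lemma exists_psiY_eq_of_psiX {S : Finset ℕ} {w : Word} (hS : S ⊆ Ex w) :
    ∃ T ⊆ Ey (psiX S w 0), psiY T (psiX S w 0) 0 = w ∧ #T = #S := by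
  have hψ : psiY S (w.map not) 0 = (psiX S w 0).map not := by
    rw [psiY_eq_map_not_psiX, map_not_map_not]
  obtain ⟨T, hT, hψT, hcard⟩ := exists_psiX_eq_of_psiY (T := S) (w := w.map not)
    (by rwa [← Ex_map_not, map_not_map_not])
  rw [hψ, Ex_map_not] at hT
  refine ⟨T, hT, ?_, hcard⟩
  rw [hψ] at hψT
  rw [psiY_eq_map_not_psiX, hψT, map_not_map_not]

lemma sum_psiY_eq_sum_psiX (w' v : Word) :
    ∑ T ∈ (Ey w').powerset, (-1 : ℤ) ^ #T * (if psiY T w' 0 = v then 1 else 0) =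
      ∑ S ∈ (Ex v).powerset, (-1 : ℤ) ^ #S * (if psiX S v 0 = w' then 1 else 0) := by
  by_cases h : ∃ T ∈ (Ey w').powerset, psiY T w' 0 = v
  · obtain ⟨T, hT, rfl⟩ := h
    obtain ⟨S, hS, hψ, hcard⟩ := exists_psiX_eq_of_psiY (mem_powerset.1 hT)
    rw [sum_eq_single_of_mem T hT fun T' hT' hne => by
        rw [if_neg fun h => hne (psiY_injOn w' hT' hT h), mul_zero],
      sum_eq_single_of_mem S (mem_powerset.2 hS) fun S' hS' hne => by
        rw [if_neg fun h => hne (psiX_injOn _ hS' (mem_powerset.2 hS) (h.trans hψ.symm)),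
          mul_zero],
      if_pos rfl, if_pos hψ, hcard]
  · push Not at h
    rw [sum_eq_zero fun T hT => by rw [if_neg (h T hT), mul_zero], eq_comm]
    refine sum_eq_zero fun S hS => ?_
    rw [if_neg, mul_zero]
    rintro rfl
    obtain ⟨T, hT, hψ, -⟩ := exists_psiY_eq_of_psiX (mem_powerset.1 hS)
    exact h T (mem_powerset.2 hT) hψ

lemma HW_apply (w v : Word) :
    HW w v = ∑ S ∈ (Ex v).powerset, (-1 : ℤ) ^ #S * if wle w (psiX S v 0) then 1 else 0 := by
  simp only [HW, Finsupp.finsetSum_apply, Finsupp.smul_apply, δ, Finsupp.single_apply,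
    smul_eq_mul]
  rw [sum_congr rfl fun w' _ => sum_psiY_eq_sum_psiX w' v, sum_comm]
  refine sum_congr rfl fun S _ => ?_
  rw [← mul_sum, sum_ite_eq]
  refine congrArg _ (if_congr ?_ rfl rfl)
  rw [mem_filter, mem_wordsOfLen]
  exact ⟨fun h => h.2, fun h => ⟨(length_eq_of_wle h).symm, h⟩⟩

lemma wle_psiX_iff {w v : Word} {S : Finset ℕ} (hf : v.count false = w.count false)
    (ht : v.count true = w.count true) (hS : S ⊆ Ex v) :
    wle w (psiX S v 0) ↔ ∀ i ∈ range (v.count false),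
      (xIdx w).getD i 0 ≤ (xIdx v).getD i 0 + if i ∈ S then 1 else 0 := by
  have hpos : ∀ i < v.count false,
      (xIdx (psiX S v 0)).getD i 0 = (xIdx v).getD i 0 + if i ∈ S then 1 else 0 := by
    intro i hi
    rw [← length_xIdx] at hi
    simp [List.getD_eq_getElem?_getD, getElem?_xIdx_psiX_zero hS, List.getElem?_eq_getElem hi]
  simp only [wle, count_psiX, hf, ht, true_and, mem_range]
  exact forall₂_congr fun i hi => by rw [hpos i (hf ▸ hi)]

lemma fX_le_fX_iff {w v : Word} {i : ℕ} (hw : i < w.count false) (hv : i < v.count false) :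
    fX w i ≤ fX v i ↔ (xIdx w).getD i 0 ≤ (xIdx v).getD i 0 := by
  have := le_getD_xIdx hw
  have := le_getD_xIdx hv
  unfold fX
  omega

lemma fX_add_one_eq_fX_iff {w v : Word} {i : ℕ} (hw : i < w.count false)
    (hv : i < v.count false) :
    fX v i + 1 = fX w i ↔ (xIdx w).getD i 0 = (xIdx v).getD i 0 + 1 := by
  have := le_getD_xIdx hw
  have := le_getD_xIdx hv
  unfold fX
  omega

lemma HW_apply_of_count_eq {w v : Word} (hf : v.count false = w.count false)
    (ht : v.count true = w.count true) :
    HW w v = ∑ S ∈ (Ex v).powerset, (-1 : ℤ) ^ #S *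
      if ∀ i ∈ range (v.count false), (xIdx w).getD i 0 ≤ (xIdx v).getD i 0 + if i ∈ S then 1 else 0
      then 1 else 0 := by
  rw [HW_apply]
  exact sum_congr rfl fun S hS => by simp only [wle_psiX_iff hf ht (mem_powerset.1 hS)]

/-- The words `v` occurring in `H w` are exactly those with the same
letter counts such that (i) `f^x_v(i) = f^x_w(i) − 1` for each `i ∈ E^x_v`
(the x's of `v` immediately followed by a y) and (ii) `f^x_v(i) ≥ f^x_w(i)` for all
other `i`; and such a `v` has coefficient `(−1)^{|E^x_v|}`. -/
theorem stmt19 (w v : Word) :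
    (HW w) v =
      if v.count false = w.count false ∧ v.count true = w.count true ∧
         (∀ i ∈ Ex v, fX v i + 1 = fX w i) ∧
         (∀ i < v.count false, i ∉ Ex v → fX w i ≤ fX v i)
      then (-1 : ℤ)^(Ex v).card else 0 := by
  by_cases hc : v.count false = w.count false ∧ v.count true = w.count true
  swap
  · rw [HW_apply, if_neg fun h => hc ⟨h.1, h.2.1⟩]
    refine sum_eq_zero fun S _ => ?_
    rw [if_neg fun h => hc ⟨by simpa using h.1.symm, by simpa using h.2.1.symm⟩, mul_zero]
  obtain ⟨hf, ht⟩ := hc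
  rw [HW_apply_of_count_eq hf ht,
    sum_powerset_neg_one_pow_mul_boole_forall_le (Ex_subset_range v)]
  refine if_congr ?_ rfl rfl
  simp only [hf, ht, true_and, mem_sdiff, mem_range, and_imp]
  refine and_congr (forall₂_congr fun i hi => ?_) (forall₃_congr fun i hi _ => ?_)
  · have hv := mem_range.1 (Ex_subset_range v hi)
    exact (fX_add_one_eq_fX_iff (by omega) hv).symm
  · exact (fX_le_fX_iff (w := w) (v := v) (by omega) (by omega)).symm
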